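/- arXiv:1908.01571 — 3 statements merged into one kernel-verified Lean document; each statement's English description precedes it below -/
import Mathlib

section
/- For every complex z, 1/Γ(z) = z·e^(γz)·∏_{n=1}^{∞} (1 + z/n)·e^(−z/n), where γ is the Euler–Mascheroni constant. -/
/-!
Multiplying out, `z ∏_{k<n} (1 + z/(k+1)) = ∏_{j≤n} (z + j) / n!` and the exponential factors
sum to `exp (-z Hₙ)`, so the `n`-th partial product is `(GammaSeq z n)⁻¹ · exp (z (γ - Hₙ + log n))`.
Euler's limit `GammaSeq z n → Γ(z)` and `Hₙ - log n → γ` then give the limit `Γ(z)⁻¹`. At the poles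
`z = -m`, where Mathlib sets `Γ(z) = 0`, the factor `z + m` of its denominator makes
`GammaSeq z n = 0`, hence `(GammaSeq z n)⁻¹ = 0`, for `n ≥ m`.
-/

open Filter Complex Real Topology
open scoped Nat

local notation "γ" => Real.eulerMascheroniConstant

namespace Complex

lemma mul_prod_one_add_div_succ (z : ℂ) (n : ℕ) :
    z * ∏ k ∈ Finset.range n, (1 + z / ((k : ℂ) + 1)) =
      (∏ j ∈ Finset.range (n + 1), (z + j)) / n ! := by
  have hterm (k : ℕ) : 1 + z / ((k : ℂ) + 1) = (z + (k + 1 : ℕ)) / (k + 1 : ℕ) := by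
    push_cast
    field_simp
    ring
  rw [Finset.prod_congr rfl fun k _ => hterm k, Finset.prod_div_distrib, ← Nat.cast_prod,
    Finset.prod_range_add_one_eq_factorial, Finset.prod_range_succ', mul_div_assoc']
  simp [mul_comm]

lemma prod_exp_neg_div_succ (z : ℂ) (n : ℕ) :
    ∏ k ∈ Finset.range n, exp (-z / ((k : ℂ) + 1)) = exp (-(z * harmonic n)) := by
  rw [← exp_sum, harmonic, Rat.cast_sum, Finset.mul_sum, ← Finset.sum_neg_distrib]
  congr 1
  refine Finset.sum_congr rfl fun k _ => ?_
  push_cast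
  ring

lemma inv_GammaSeq_eq {n : ℕ} (hn : n ≠ 0) (z : ℂ) :
    (GammaSeq z n)⁻¹ =
      (∏ j ∈ Finset.range (n + 1), (z + j)) / n ! * exp (-(z * Real.log n)) := by
  rw [GammaSeq, inv_div, cpow_def_of_ne_zero (Nat.cast_ne_zero.2 hn), ← natCast_log, mul_comm _ z,
    exp_neg]
  ring

lemma weierstrass_partial_product_eq {n : ℕ} (hn : n ≠ 0) (z : ℂ) :
    z * exp (γ * z) * ∏ k ∈ Finset.range n, (1 + z / ((k : ℂ) + 1)) * exp (-z / ((k : ℂ) + 1)) =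
      (GammaSeq z n)⁻¹ * exp (z * (γ - harmonic n + Real.log n)) := by
  have hexp : exp (-(z * Real.log n)) * exp (z * (γ - harmonic n + Real.log n)) =
      exp (γ * z) * exp (-(z * harmonic n)) := by
    rw [← exp_add, ← exp_add]
    ring_nf
  rw [Finset.prod_mul_distrib, prod_exp_neg_div_succ, inv_GammaSeq_eq hn,
    ← mul_prod_one_add_div_succ, mul_assoc _ (exp _) (exp _), hexp]
  ring

lemma tendsto_inv_GammaSeq (z : ℂ) :
    Tendsto (fun n => (GammaSeq z n)⁻¹) atTop (𝓝 (Gamma z)⁻¹) := by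
  by_cases hΓ : Gamma z = 0
  · obtain ⟨m, rfl⟩ := (Gamma_eq_zero_iff z).1 hΓ
    refine tendsto_const_nhds.congr' ?_
    filter_upwards [eventually_ge_atTop m] with n hn
    rw [hΓ, inv_zero, GammaSeq, Finset.prod_eq_zero (i := m) (by simp; omega) (by ring),
      div_zero, inv_zero]
  · exact (GammaSeq_tendsto_Gamma z).inv₀ hΓ

lemma tendsto_exp_mul_eulerMascheroni_sub_harmonic_add_log (z : ℂ) :
    Tendsto (fun n : ℕ => exp (z * (γ - harmonic n + Real.log n))) atTop (𝓝 1) := by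
  have h : Tendsto (fun n : ℕ => z * (γ - ((harmonic n - Real.log n : ℝ) : ℂ))) atTop (𝓝 0) := by
    simpa using (((continuous_ofReal.tendsto γ).comp tendsto_harmonic_sub_log).const_sub
      (γ : ℂ)).const_mul z
  simpa [sub_add, Function.comp_def] using (continuous_exp.tendsto 0).comp h

end Complex

theorem weierstrass_product_one_div_Gamma (z : ℂ) :
    Tendsto (fun n : ℕ =>
        z * Complex.exp ((Real.eulerMascheroniConstant : ℂ) * z) *
          ∏ k ∈ Finset.range n,
            (1 + z / ((k : ℂ) + 1)) * Complex.exp (-z / ((k : ℂ) + 1)))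
      atTop (nhds (Complex.Gamma z)⁻¹) := by
  have h := (tendsto_inv_GammaSeq z).mul (tendsto_exp_mul_eulerMascheroni_sub_harmonic_add_log z)
  rw [mul_one] at h
  refine h.congr' ?_
  filter_upwards [eventually_ne_atTop 0] with n hn
  exact (weierstrass_partial_product_eq hn z).symm
end

section
/- For every natural number n ≥ 2, ∏_{i=1}^{n−1} Γ(i/n) = √((2π)^(n−1) / n). -/
/-!
Pair the factor `Γ(k/n)` with `Γ(1 - k/n) = Γ((n-k)/n)`: by Euler's reflection formula the
square of the product is `π^(n-1) / ∏ sin(π k/n)`. The sine product is `n / 2^(n-1)`, obtained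
by taking norms in `∏ (1 - ζ^k) = n` for a primitive `n`-th root of unity `ζ`, since
`|1 - e^{iθ}| = 2 sin(θ/2)` for `θ ∈ [0, 2π]`.
-/

open Real Finset

theorem norm_one_sub_exp_two_pi_mul_I_div_pow {n k : ℕ} (hk : k ≤ n) :
    ‖1 - Complex.exp (2 * π * Complex.I / n) ^ k‖ = 2 * sin (π * (k / n)) := by
  have hθ : (k : ℂ) * (2 * π * Complex.I / n) = Complex.I * ↑(2 * (π * (k / n))) := by
    push_cast; ring
  have hsin : 0 ≤ sin (π * (k / n)) :=
    sin_nonneg_of_nonneg_of_le_pi (by positivity)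
      (mul_le_of_le_one_right pi_pos.le (div_le_one_of_le₀ (by exact_mod_cast hk) (by positivity)))
  rw [norm_sub_rev, ← Complex.exp_nat_mul, hθ, Complex.norm_exp_I_mul_ofReal_sub_one,
    mul_div_cancel_left₀ _ two_ne_zero, Real.norm_eq_abs, abs_of_nonneg (by positivity)]

theorem prod_sin_pi_mul_succ_div (n : ℕ) :
    ∏ k ∈ range n, sin (π * ((k + 1) / (n + 1))) = (n + 1) / 2 ^ n := by
  have h := congrArg norm
    (Complex.isPrimitiveRoot_exp (n + 1) n.succ_ne_zero).prod_one_sub_pow_eq_order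
  rw [norm_prod, prod_congr rfl fun k hk => norm_one_sub_exp_two_pi_mul_I_div_pow
    (by simp at hk; omega : k + 1 ≤ n + 1), prod_mul_distrib, prod_const, card_range,
    ← Nat.cast_succ, Complex.norm_natCast] at h
  rw [eq_div_iff (by positivity), mul_comm]
  exact_mod_cast h

theorem prod_Gamma_one_sub_succ_div (n : ℕ) :
    ∏ k ∈ range n, Gamma (1 - (k + 1) / (n + 1)) = ∏ k ∈ range n, Gamma ((k + 1) / (n + 1)) := by
  rw [← prod_range_reflect]
  refine prod_congr rfl fun k hk => ?_
  rw [show n - 1 - k = n - (k + 1) by omega, Nat.cast_sub (by simp at hk; omega)]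
  push_cast
  congr 1
  field_simp
  ring

theorem prod_Gamma_succ_div (n : ℕ) :
    ∏ k ∈ range n, Gamma ((k + 1) / (n + 1)) = √((2 * π) ^ n / (n + 1)) := by
  have hpos : 0 < ∏ k ∈ range n, Gamma ((k + 1) / (n + 1)) :=
    prod_pos fun k _ => Gamma_pos_of_pos (by positivity)
  rw [← sqrt_sq hpos.le]
  congr 1
  calc (∏ k ∈ range n, Gamma ((k + 1) / (n + 1))) ^ 2
      = ∏ k ∈ range n, (Gamma ((k + 1) / (n + 1)) * Gamma (1 - (k + 1) / (n + 1))) := by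
        rw [prod_mul_distrib, prod_Gamma_one_sub_succ_div, sq]
    _ = π ^ n / ∏ k ∈ range n, sin (π * ((k + 1) / (n + 1))) := by
        simp only [Gamma_mul_Gamma_one_sub, prod_div_distrib, prod_const, card_range]
    _ = (2 * π) ^ n / (n + 1) := by
        rw [prod_sin_pi_mul_succ_div]
        field_simp
        ring

theorem prod_Gamma_fractions (n : ℕ) (hn : 2 ≤ n) :
    (∏ i ∈ Finset.Icc 1 (n - 1), Real.Gamma ((i : ℝ) / n)) =
      Real.sqrt ((2 * Real.pi) ^ (n - 1) / n) := by
  obtain ⟨m, rfl⟩ : ∃ m, n = m + 1 := ⟨n - 1, by omega⟩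
  rw [Nat.add_sub_cancel, ← Ico_add_one_right_eq_Icc, prod_Ico_eq_prod_range, Nat.add_sub_cancel]
  simp_rw [add_comm 1]
  push_cast
  exact prod_Gamma_succ_div m
end

section
/- For every natural number n ≥ 2, ∏_{i=1}^{n−1} sin(iπ/n) = n / 2^(n−1). -/
/-!
With `μ = exp (2πi/n)` a primitive `n`-th root of unity, `∏_{k=1}^{n-1} (1 - μ^k) = n`
(evaluate `(X^n - 1)/(X - 1) = ∏ (X - μ^k)` at `1`). Taking norms, `|1 - μ^k| = 2 sin (kπ/n)`.
-/

open Real Finset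

lemma Complex.norm_one_sub_exp_two_pi_I_div_pow (n k : ℕ) :
    ‖1 - Complex.exp (2 * π * Complex.I / n) ^ k‖ = |2 * Real.sin (k * π / n)| := by
  rw [← Complex.exp_nat_mul, norm_sub_rev,
    show (k : ℂ) * (2 * π * Complex.I / n) = Complex.I * (2 * k * π / n : ℝ) by push_cast; ring,
    Complex.norm_exp_I_mul_ofReal_sub_one, Real.norm_eq_abs]
  congr 3
  ring

lemma prod_two_mul_sin_mul_pi_div (n : ℕ) :
    ∏ k ∈ range n, 2 * sin ((k + 1) * π / (n + 1)) = n + 1 := by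
  have hμ := Complex.isPrimitiveRoot_exp (n + 1) n.succ_ne_zero
  have h := congrArg (‖·‖) hμ.prod_one_sub_pow_eq_order
  simp only [norm_prod, Complex.norm_one_sub_exp_two_pi_I_div_pow] at h
  have hsin : ∀ k ∈ range n, 0 ≤ 2 * sin ((k + 1) * π / (n + 1)) := by
    intro k hk
    have hk : (k : ℝ) + 1 ≤ n + 1 := by
      rw [mem_range] at hk; norm_cast; omega
    refine mul_nonneg zero_le_two (sin_nonneg_of_nonneg_of_le_pi (by positivity) ?_)
    rw [div_le_iff₀ (by positivity)]
    nlinarith [pi_pos]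
  rw [← prod_congr rfl fun k hk => abs_of_nonneg (hsin k hk)]
  exact_mod_cast h

theorem prod_sin_fractions (n : ℕ) (hn : 2 ≤ n) :
    (∏ i ∈ Finset.Icc 1 (n - 1), Real.sin ((i : ℝ) * Real.pi / n)) =
      (n : ℝ) / 2 ^ (n - 1) := by
  obtain ⟨m, rfl⟩ : ∃ m, n = m + 1 := ⟨n - 1, by omega⟩
  have h := prod_two_mul_sin_mul_pi_div m
  rw [prod_mul_distrib, prod_const, card_range] at h
  rw [Nat.add_sub_cancel, ← Ico_add_one_right_eq_Icc, prod_Ico_eq_prod_range,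
    Nat.add_sub_cancel, eq_div_iff (by positivity), mul_comm]
  push_cast
  simpa only [add_comm] using h
end
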